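/- In the extended infinitary system, the implication (F → ⋁_{i∈I} G_i) → ⋁_{i∈I}(F → G_i) is a theorem, for any formula F and any non-empty bounded family (G_i)_{i∈I} of formulas. -/

import Mathlib

open Classical

/-- Infinitary propositional formulas over a signature `σ`: atoms, set-indexed
conjunctions and disjunctions (represented by families indexed by a type,
which corresponds exactly to *bounded* sets of formulas in the hierarchy),
and implication. -/
inductive IForm (σ : Type) : Type 1
  | atom : σ → IForm σ
  | conj : (ι : Type) → (ι → IForm σ) → IForm σ
  | disj : (ι : Type) → (ι → IForm σ) → IForm σ
  | impl : IForm σ → IForm σ → IForm σ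

namespace IForm

variable {σ : Type}

/-- `⊥` is the empty disjunction. -/
def bot : IForm σ := disj Empty Empty.elim

/-- `¬F` abbreviates `F → ⊥`. -/
def neg (F : IForm σ) : IForm σ := impl F bot

/-- Binary conjunction `F ∧ G` as `{F, G}^∧`. -/
def and2 (F G : IForm σ) : IForm σ := conj Bool (fun b => cond b F G)

/-- Binary disjunction `F ∨ G` as `{F, G}^∨`. -/
def or2 (F G : IForm σ) : IForm σ := disj Bool (fun b => cond b F G)

/-- Ternary disjunction. -/
def or3 (F G H : IForm σ) : IForm σ := disj (Fin 3) (fun i => [F, G, H].get i)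

/-- `F ↔ G` abbreviates `(F → G) ∧ (G → F)`. -/
def biimp (F G : IForm σ) : IForm σ := and2 (impl F G) (impl G F)

/-- Satisfaction of an infinitary formula by an interpretation `I ⊆ σ`. -/
def sat (I : Set σ) : IForm σ → Prop
  | atom p => p ∈ I
  | conj _ f => ∀ i, sat I (f i)
  | disj _ f => ∃ i, sat I (f i)
  | impl F G => sat I F → sat I G

/-- The reduct `F^I` of a formula w.r.t. an interpretation `I`. -/
noncomputable def reduct (I : Set σ) : IForm σ → IForm σ
  | atom p => if p ∈ I then atom p else bot
  | conj ι f => conj ι (fun i => reduct I (f i))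
  | disj ι f => disj ι (fun i => reduct I (f i))
  | impl F G => if sat I (impl F G) then impl (reduct I F) (reduct I G) else bot

/-- `I` satisfies a set of formulas if it satisfies all its elements. -/
def satSet (I : Set σ) (H : Set (IForm σ)) : Prop := ∀ F ∈ H, sat I F

/-- `I` is a stable model of a set `H` of formulas if it is minimal w.r.t.
set inclusion among the interpretations satisfying the reduct `H^I`. -/
def StableModel (I : Set σ) (H : Set (IForm σ)) : Prop :=
  satSet I (reduct I '' H) ∧ ∀ J : Set σ, satSet J (reduct I '' H) → J ⊆ I → J = I

noncomputable instance : DecidableEq (IForm σ) := Classical.decEq _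

/-- The basic infinitary system of natural deduction: sequents `Γ ⇒ F` where
`Γ` is a finite set of infinitary formulas.  Axiom `F ⇒ F`; introduction and
elimination rules for set-indexed conjunction and disjunction and for
implication; weakening. -/
inductive Deriv : Finset (IForm σ) → IForm σ → Prop
  | ax (F : IForm σ) : Deriv {F} F
  | conjI (Γ : Finset (IForm σ)) (ι : Type) (f : ι → IForm σ) :
      (∀ i, Deriv Γ (f i)) → Deriv Γ (conj ι f)
  | conjE (Γ : Finset (IForm σ)) (ι : Type) (f : ι → IForm σ) (i : ι) :
      Deriv Γ (conj ι f) → Deriv Γ (f i)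
  | disjI (Γ : Finset (IForm σ)) (ι : Type) (f : ι → IForm σ) (i : ι) :
      Deriv Γ (f i) → Deriv Γ (disj ι f)
  | disjE (Γ Δ : Finset (IForm σ)) (ι : Type) (f : ι → IForm σ) (F : IForm σ) :
      Deriv Γ (disj ι f) → (∀ i, Deriv (insert (f i) Δ) F) → Deriv (Γ ∪ Δ) F
  | implI (Γ : Finset (IForm σ)) (F G : IForm σ) :
      Deriv (insert F Γ) G → Deriv Γ (impl F G)
  | implE (Γ Δ : Finset (IForm σ)) (F G : IForm σ) :
      Deriv Γ F → Deriv Δ (impl F G) → Deriv (Γ ∪ Δ) G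
  | weak (Γ Δ : Finset (IForm σ)) (F : IForm σ) :
      Deriv Γ F → Deriv (Γ ∪ Δ) F

end IForm
namespace IForm

variable {σ : Type}

/-- The extended system: the basic system plus the axiom schemas
`F ∨ (F → G) ∨ ¬G` (Hosoi), the converse infinitary De Morgan law
`¬⋀ F → ⋁ ¬F`, and the two converse infinitary distributivity laws
(for non-empty families). -/
inductive DerivE : Finset (IForm σ) → IForm σ → Prop
  | ax (F : IForm σ) : DerivE {F} F
  | conjI (Γ : Finset (IForm σ)) (ι : Type) (f : ι → IForm σ) :
      (∀ i, DerivE Γ (f i)) → DerivE Γ (conj ι f)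
  | conjE (Γ : Finset (IForm σ)) (ι : Type) (f : ι → IForm σ) (i : ι) :
      DerivE Γ (conj ι f) → DerivE Γ (f i)
  | disjI (Γ : Finset (IForm σ)) (ι : Type) (f : ι → IForm σ) (i : ι) :
      DerivE Γ (f i) → DerivE Γ (disj ι f)
  | disjE (Γ Δ : Finset (IForm σ)) (ι : Type) (f : ι → IForm σ) (F : IForm σ) :
      DerivE Γ (disj ι f) → (∀ i, DerivE (insert (f i) Δ) F) → DerivE (Γ ∪ Δ) F
  | implI (Γ : Finset (IForm σ)) (F G : IForm σ) :
      DerivE (insert F Γ) G → DerivE Γ (impl F G)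
  | implE (Γ Δ : Finset (IForm σ)) (F G : IForm σ) :
      DerivE Γ F → DerivE Δ (impl F G) → DerivE (Γ ∪ Δ) G
  | weak (Γ Δ : Finset (IForm σ)) (F : IForm σ) :
      DerivE Γ F → DerivE (Γ ∪ Δ) F
  | hosoi (F G : IForm σ) : DerivE ∅ (or3 F (impl F G) (neg G))
  | demConv (ι : Type) (f : ι → IForm σ) :
      DerivE ∅ (impl (neg (conj ι f)) (disj ι fun i => neg (f i)))
  | distConv1 (ι : Type) [Nonempty ι] (κ : ι → Type) (g : (i : ι) → κ i → IForm σ) :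
      DerivE ∅ (impl (conj ι fun i => disj (κ i) (g i))
                     (disj ((i : ι) → κ i) fun c => conj ι fun i => g i (c i)))
  | distConv2 (ι : Type) [Nonempty ι] (κ : ι → Type) (g : (i : ι) → κ i → IForm σ) :
      DerivE ∅ (impl (conj ((i : ι) → κ i) fun c => disj ι fun i => g i (c i))
                     (disj ι fun i => conj (κ i) (g i)))

/-- The classical extended system: like the extended system, but with the
Hosoi axiom schema replaced by the law of the excluded middle `F ∨ ¬F`. -/
inductive DerivC : Finset (IForm σ) → IForm σ → Prop
  | ax (F : IForm σ) : DerivC {F} F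
  | conjI (Γ : Finset (IForm σ)) (ι : Type) (f : ι → IForm σ) :
      (∀ i, DerivC Γ (f i)) → DerivC Γ (conj ι f)
  | conjE (Γ : Finset (IForm σ)) (ι : Type) (f : ι → IForm σ) (i : ι) :
      DerivC Γ (conj ι f) → DerivC Γ (f i)
  | disjI (Γ : Finset (IForm σ)) (ι : Type) (f : ι → IForm σ) (i : ι) :
      DerivC Γ (f i) → DerivC Γ (disj ι f)
  | disjE (Γ Δ : Finset (IForm σ)) (ι : Type) (f : ι → IForm σ) (F : IForm σ) :
      DerivC Γ (disj ι f) → (∀ i, DerivC (insert (f i) Δ) F) → DerivC (Γ ∪ Δ) F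
  | implI (Γ : Finset (IForm σ)) (F G : IForm σ) :
      DerivC (insert F Γ) G → DerivC Γ (impl F G)
  | implE (Γ Δ : Finset (IForm σ)) (F G : IForm σ) :
      DerivC Γ F → DerivC Δ (impl F G) → DerivC (Γ ∪ Δ) G
  | weak (Γ Δ : Finset (IForm σ)) (F : IForm σ) :
      DerivC Γ F → DerivC (Γ ∪ Δ) F
  | lem (F : IForm σ) : DerivC ∅ (or2 F (neg F))
  | demConv (ι : Type) (f : ι → IForm σ) :
      DerivC ∅ (impl (neg (conj ι f)) (disj ι fun i => neg (f i)))
  | distConv1 (ι : Type) [Nonempty ι] (κ : ι → Type) (g : (i : ι) → κ i → IForm σ) :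
      DerivC ∅ (impl (conj ι fun i => disj (κ i) (g i))
                     (disj ((i : ι) → κ i) fun c => conj ι fun i => g i (c i)))
  | distConv2 (ι : Type) [Nonempty ι] (κ : ι → Type) (g : (i : ι) → κ i → IForm σ) :
      DerivC ∅ (impl (conj ((i : ι) → κ i) fun c => disj ι fun i => g i (c i))
                     (disj ι fun i => conj (κ i) (g i)))

end IForm

/-!
Apply Hosoi's axiom `F ∨ (F → G i) ∨ ¬G i` to every `i` and distribute the conjunction of
these disjunctions by the first converse distributivity law: each disjunct picks one of the
three alternatives for every `i`. If some `i` picks `F → G i`, we are done; if some `i` picks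
`F`, the hypothesis `F → ⋁ G` yields some `G j` and hence `F → G j`; if every `i` picks
`¬G i`, the hypothesis refutes `F`, so `F → G i` holds for any `i`, and `I` is non-empty.
-/

namespace IForm

variable {σ : Type} {Γ Δ : Finset (IForm σ)} {F G : IForm σ}

theorem DerivE.mono (h : DerivE Γ F) (hΓ : Γ ⊆ Δ) : DerivE Δ F := by
  simpa [Finset.union_eq_right.mpr hΓ] using DerivE.weak Γ Δ F h

theorem DerivE.of_empty (h : DerivE ∅ F) : DerivE Γ F :=
  h.mono (Finset.empty_subset Γ)

theorem DerivE.of_mem (h : F ∈ Γ) : DerivE Γ F :=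
  (DerivE.ax F).mono (Finset.singleton_subset_iff.mpr h)

theorem DerivE.mp (hFG : DerivE Γ (impl F G)) (hF : DerivE Γ F) : DerivE Γ G := by
  simpa using DerivE.implE Γ Γ F G hF hFG

theorem DerivE.disj_elim {ι : Type} {f : ι → IForm σ} (h : DerivE Γ (disj ι f))
    (hf : ∀ i, DerivE (insert (f i) Γ) F) : DerivE Γ F := by
  simpa using DerivE.disjE Γ Γ ι f F h hf

theorem DerivE.bot_elim (h : DerivE Γ bot) : DerivE Γ F :=
  h.disj_elim fun i => i.elim

theorem DerivE.impl_of_neg (h : DerivE Γ (neg F)) : DerivE Γ (impl F G) :=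
  DerivE.implI _ _ _ <| DerivE.bot_elim <|
    (h.mono (Finset.subset_insert _ _)).mp (.of_mem (by simp))

theorem DerivE.neg_of_impl_disj {I : Type} {G : I → IForm σ}
    (hH : DerivE Γ (impl F (disj I G))) (hG : ∀ i, DerivE Γ (neg (G i))) :
    DerivE Γ (neg F) := by
  have hF : DerivE (insert F Γ) F := .of_mem (by simp)
  refine DerivE.implI _ _ _ <| ((hH.mono (Finset.subset_insert _ _)).mp hF).disj_elim fun i => ?_
  have hΓ : Γ ⊆ insert (G i) (insert F Γ) :=
    (Finset.subset_insert _ _).trans (Finset.subset_insert _ _)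
  exact ((hG i).mono hΓ).mp (.of_mem (by simp))

theorem DerivE.disj_impl_of_impl_disj {I : Type} {G : I → IForm σ}
    (hH : DerivE Γ (impl F (disj I G))) (hF : DerivE Γ F) :
    DerivE Γ (disj I fun i => impl F (G i)) :=
  (hH.mp hF).disj_elim fun i =>
    DerivE.disjI _ _ _ i <| DerivE.implI _ _ _ <| .of_mem (by simp)

theorem DerivE.hosoi_choice (I : Type) [Nonempty I] (F : IForm σ) (G : I → IForm σ) :
    DerivE Γ (disj (I → Fin 3) fun c => conj I fun i => [F, impl F (G i), neg (G i)].get (c i)) :=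
  (DerivE.distConv1 I (fun _ => Fin 3) _).of_empty.mp
    (DerivE.conjI _ _ _ fun i => (DerivE.hosoi F (G i)).of_empty)

theorem DerivE.disj_impl_of_hosoi_choice {I : Type} [Nonempty I] {G : I → IForm σ}
    {c : I → Fin 3} (hH : DerivE Γ (impl F (disj I G)))
    (hc : DerivE Γ (conj I fun i => [F, impl F (G i), neg (G i)].get (c i))) :
    DerivE Γ (disj I fun i => impl F (G i)) := by
  have hci (i : I) := DerivE.conjE _ _ _ i hc
  by_cases hall : ∀ i, c i = 2
  · obtain ⟨i⟩ := ‹Nonempty I›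
    refine DerivE.disjI _ _ _ i (DerivE.impl_of_neg (DerivE.neg_of_impl_disj hH fun j => ?_))
    simpa [hall j] using hci j
  · obtain ⟨i, hi⟩ := not_forall.mp hall
    have hFi := hci i
    generalize c i = k at hFi hi
    fin_cases k
    · exact hH.disj_impl_of_impl_disj hFi
    · exact DerivE.disjI _ _ _ i hFi
    · exact absurd rfl hi

end IForm

open IForm in
/-- In the extended system, `(F → ⋁_{i∈I} G_i) → ⋁_{i∈I}(F → G_i)`
is a theorem, for any formula `F` and non-empty family `(G_i)_{i∈I}`. -/
theorem extended_imp_disj {σ : Type} (I : Type) [Nonempty I]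
    (F : IForm σ) (G : I → IForm σ) :
    DerivE ∅ (impl
      (impl F (disj I G))
      (disj I fun i => impl F (G i))) := by
  refine DerivE.implI _ _ _ <| (DerivE.hosoi_choice I F G).disj_elim fun c => ?_
  exact DerivE.disj_impl_of_hosoi_choice (c := c) (.of_mem (by simp)) (.of_mem (by simp))
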